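/- arXiv:2405.21023 — 2 statements merged into one kernel-verified Lean document; each statement's English description precedes it below -/
import Mathlib

section
/- With f(δ) = Σ_{k=1}^B clamp(p̂_k + δ, l_k, u_k) as above, if Σ_k l_k < D < Σ_k u_k, then the output vector p̃ with p̃_k = clamp(p̂_k + δ, l_k, u_k) for any δ satisfying f(δ) = D is unique: if f(δ₁) = f(δ₂) = D for δ₁ ≤ δ₂, then clamp(p̂_k + δ₁, l_k, u_k) = clamp(p̂_k + δ₂, l_k, u_k) for every k. -/
open Finset

theorem monotone_clamp_add {α : Type*} [LinearOrder α] [Add α] [AddLeftMono α] (a l u : α) :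
    Monotone fun δ => min (max (a + δ) l) u :=
  fun _ _ h => min_le_min_right u (max_le_max_right l (add_le_add_right h a))

theorem Finset.apply_eq_of_sum_eq_of_monotone {ι α M : Type*} [Preorder α] [AddCommMonoid M]
    [PartialOrder M] [IsOrderedCancelAddMonoid M] {s : Finset ι} {f : ι → α → M}
    (hf : ∀ i ∈ s, Monotone (f i)) {x y : α} (hxy : x ≤ y)
    (hsum : ∑ i ∈ s, f i x = ∑ i ∈ s, f i y) : ∀ i ∈ s, f i x = f i y :=
  (sum_eq_sum_iff_of_le fun i hi => hf i hi hxy).mp hsum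

theorem hypersimplex_output_unique_general {B : ℕ}
    (phat l u : Fin B → ℝ)
    (D : ℝ)
    (δ₁ δ₂ : ℝ) (h12 : δ₁ ≤ δ₂)
    (h1 : (∑ k, min (max (phat k + δ₁) (l k)) (u k)) = D)
    (h2 : (∑ k, min (max (phat k + δ₂) (l k)) (u k)) = D) :
    ∀ k, min (max (phat k + δ₁) (l k)) (u k)
        = min (max (phat k + δ₂) (l k)) (u k) := fun k =>
  apply_eq_of_sum_eq_of_monotone (f := fun k δ => min (max (phat k + δ) (l k)) (u k))
    (fun k _ => monotone_clamp_add (phat k) (l k) (u k)) h12 (h1.trans h2.symm) k (mem_univ k)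

/-- Uniqueness of the hypersimplex-projection output: if `Σ l_k < D < Σ u_k` and
two shifts `δ₁ ≤ δ₂` both achieve `f(δᵢ) = D`, then the clamped vectors agree
componentwise. -/
theorem hypersimplex_output_unique {B : ℕ}
    (phat l u : Fin B → ℝ) (hlu : ∀ k, l k ≤ u k)
    (D : ℝ) (hD1 : (∑ k, l k) < D) (hD2 : D < ∑ k, u k)
    (δ₁ δ₂ : ℝ) (h12 : δ₁ ≤ δ₂)
    (h1 : (∑ k, min (max (phat k + δ₁) (l k)) (u k)) = D)
    (h2 : (∑ k, min (max (phat k + δ₂) (l k)) (u k)) = D) :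
    ∀ k, min (max (phat k + δ₁) (l k)) (u k)
        = min (max (phat k + δ₂) (l k)) (u k) :=
  hypersimplex_output_unique_general phat l u D δ₁ δ₂ h12 h1 h2
end

section
/- MILP encoding of the knapsack feasibility-repair layer: let w ∈ ℝ₊^K, l ≥ 0, and let P be a K×K permutation matrix sorting items so that w̃ = P w are the weights in the greedy order. Suppose ỹ ∈ {0,1}^K satisfies (i) ỹ_k ≥ ỹ_{k+1} for all k < K, (ii) w̃ᵀ ỹ ≤ l, and (iii) for each k, Σ_{i=1}^{k} w̃_i ≥ (1 − ỹ_k)(l + 1) when each w̃_i ≥ 1 is integral and l is integral. Then ỹ is exactly the greedy selection: ỹ_k = 1 iff Σ_{i=1}^{k} w̃_i ≤ l. -/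
/-!
If the `k`-th prefix sum is at most `l`, the prefix constraint forces `ỹ_k = 1`: with `ỹ_k = 0`
it would demand a prefix sum of at least `l + 1`. Conversely, if `ỹ_k = 1` then monotonicity
selects every item up to `k`, so the `k`-th prefix sum is bounded by the selected weight,
which is at most `l` by the capacity constraint.
-/

open Finset

theorem Fin.antitone_of_succ_le {K : ℕ} {α : Type*} [Preorder α] {f : Fin K → α}
    (h : ∀ k : Fin K, ∀ hk : (k : ℕ) + 1 < K, f ⟨k + 1, hk⟩ ≤ f k) : Antitone f := by
  cases K with
  | zero => exact fun i => i.elim0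
  | succ n => exact Fin.antitone_iff_succ_le.2 fun i => h i.castSucc (by simp)

theorem eq_one_of_le_of_antitone {ι : Type*} [Preorder ι] {y : ι → ℤ}
    (hy01 : ∀ i, y i = 0 ∨ y i = 1) (hy : Antitone y) {i k : ι} (hik : i ≤ k) (hk : y k = 1) :
    y i = 1 :=
  (hy01 i).resolve_left fun h0 => by linarith [hy hik]

theorem sum_le_sum_mul_of_eq_one {ι R : Type*} [Fintype ι] [NonAssocSemiring R] [PartialOrder R]
    [IsOrderedAddMonoid R] {s : Finset ι} {w y : ι → R} (hone : ∀ i ∈ s, y i = 1)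
    (hnonneg : ∀ i, 0 ≤ w i * y i) : ∑ i ∈ s, w i ≤ ∑ i, w i * y i :=
  calc ∑ i ∈ s, w i = ∑ i ∈ s, w i * y i := sum_congr rfl fun i hi => by rw [hone i hi, mul_one]
    _ ≤ ∑ i, w i * y i := sum_le_univ_sum_of_nonneg hnonneg

theorem knapsack_repair_milp_exact_general {K : ℕ}
    (w : Fin K → ℤ) (hw : ∀ i, 1 ≤ w i)
    (l : ℤ)
    (y : Fin K → ℤ)
    (hy01 : ∀ k, y k = 0 ∨ y k = 1)
    (hmono : ∀ k : Fin K, ∀ h : (k : ℕ) + 1 < K, y ⟨(k : ℕ) + 1, h⟩ ≤ y k)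
    (hcap : (∑ k, w k * y k) ≤ l)
    (hpref : ∀ k : Fin K,
      (1 - y k) * (l + 1) ≤ ∑ i ∈ Finset.univ.filter (fun i => i ≤ k), w i) :
    ∀ k : Fin K,
      y k = 1 ↔ (∑ i ∈ Finset.univ.filter (fun i => i ≤ k), w i) ≤ l := by
  have hanti : Antitone y := Fin.antitone_of_succ_le hmono
  have hselected_nonneg : ∀ i, 0 ≤ w i * y i := fun i =>
    mul_nonneg (by linarith [hw i]) (by rcases hy01 i with h | h <;> simp [h])
  intro k
  constructor
  · intro hk
    calc ∑ i ∈ univ.filter (· ≤ k), w i ≤ ∑ i, w i * y i :=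
          sum_le_sum_mul_of_eq_one
            (fun i hi => eq_one_of_le_of_antitone hy01 hanti (mem_filter.1 hi).2 hk)
            hselected_nonneg
      _ ≤ l := hcap
  · intro hle
    refine (hy01 k).resolve_left fun h0 => ?_
    have hforced := hpref k
    rw [h0] at hforced
    linarith

/-- Exactness of the MILP encoding of the knapsack feasibility-repair layer:
with integral weights `w̃ᵢ ≥ 1` (in sorted greedy order) and integral capacity
`l ≥ 0`, any 0/1 vector `ỹ` satisfying the monotonicity, capacity, and prefix
constraints is exactly the greedy selection: `ỹ_k = 1` iff the prefix sum up
to `k` is at most `l`. -/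
theorem knapsack_repair_milp_exact {K : ℕ}
    (w : Fin K → ℤ) (hw : ∀ i, 1 ≤ w i)
    (l : ℤ) (hl : 0 ≤ l)
    (y : Fin K → ℤ)
    (hy01 : ∀ k, y k = 0 ∨ y k = 1)
    (hmono : ∀ k : Fin K, ∀ h : (k : ℕ) + 1 < K, y ⟨(k : ℕ) + 1, h⟩ ≤ y k)
    (hcap : (∑ k, w k * y k) ≤ l)
    (hpref : ∀ k : Fin K,
      (1 - y k) * (l + 1) ≤ ∑ i ∈ Finset.univ.filter (fun i => i ≤ k), w i) :
    ∀ k : Fin K,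
      y k = 1 ↔ (∑ i ∈ Finset.univ.filter (fun i => i ≤ k), w i) ≤ l :=
  knapsack_repair_milp_exact_general w hw l y hy01 hmono hcap hpref
end
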